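/- Let Γ₀ be the graph with vertex set {a, b, c, d, g, h, q} where {a,b,c,d} spans a 4-cycle (in this cyclic order), g is adjacent exactly to a and c among {a,b,c,d}, h is adjacent exactly to b and d among {a,b,c,d}, g and h are non-adjacent, and q is adjacent exactly to a, b, c, d. Let Γ₁ be the graph obtained from Γ₀ by replacing the vertex q with two adjacent vertices e, f, each adjacent exactly to a, b, c, d. Then the homomorphism φ : A(Γ₀) → A(Γ₁) defined by φ(q) = ef and φ(v) = v for all other vertices v is injective. -/
import Mathlib


namespace Paper

variable {V : Type*}

/-- Relators of the right-angled Artin group: commutators of adjacent vertices. -/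
def raagRels (G : SimpleGraph V) : Set (FreeGroup V) :=
  {r | ∃ u v : V, G.Adj u v ∧
    r = FreeGroup.of u * FreeGroup.of v * (FreeGroup.of u)⁻¹ * (FreeGroup.of v)⁻¹}

/-- The right-angled Artin group on a simple graph. -/
def RAAG (G : SimpleGraph V) : Type _ :=
  PresentedGroup (raagRels G)

instance (G : SimpleGraph V) : Group (RAAG G) :=
  inferInstanceAs (Group (PresentedGroup (raagRels G)))

/-- The generator of `RAAG G` corresponding to a vertex. -/
def raagOf (G : SimpleGraph V) (v : V) : RAAG G :=
  PresentedGroup.of v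

/-- Evaluation of a word (a list of letters, each a vertex with a sign) in `RAAG G`. -/
def raagWord (G : SimpleGraph V) (w : List (V × Bool)) : RAAG G :=
  (w.map fun p => if p.2 then raagOf G p.1 else (raagOf G p.1)⁻¹).prod

/-- A word is reduced if any word representing the same element is at least as long. -/
def IsReducedWord (G : SimpleGraph V) (w : List (V × Bool)) : Prop :=
  ∀ w' : List (V × Bool), raagWord G w' = raagWord G w → w.length ≤ w'.length

/-- Word length of an element of `RAAG G` with respect to the vertex generating set. -/
noncomputable def raagLength (G : SimpleGraph V) (g : RAAG G) : ℕ :=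
  sInf {n | ∃ w : List (V × Bool), raagWord G w = g ∧ w.length = n}

/-- Vertices of the graph Γ₀. -/
inductive V0 : Type
  | a | b | c | d | g | h | q
deriving DecidableEq

/-- Vertices of the graph Γ₁. -/
inductive V1 : Type
  | a | b | c | d | g | h | e | f
deriving DecidableEq

/-- Generating relation for the edges of Γ₀: the 4-cycle a b c d, g joined to a and c,
h joined to b and d, and q joined to a, b, c, d. -/
def rel0 : V0 → V0 → Prop := fun x y =>
  ((x, y) : V0 × V0) ∈ ([(.a, .b), (.b, .c), (.c, .d), (.d, .a),
    (.g, .a), (.g, .c), (.h, .b), (.h, .d),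
    (.q, .a), (.q, .b), (.q, .c), (.q, .d)] : List (V0 × V0))

/-- Generating relation for the edges of Γ₁: same as Γ₀ on a,b,c,d,g,h, with q replaced
by two adjacent vertices e, f, each adjacent to a, b, c, d. -/
def rel1 : V1 → V1 → Prop := fun x y =>
  ((x, y) : V1 × V1) ∈ ([(.a, .b), (.b, .c), (.c, .d), (.d, .a),
    (.g, .a), (.g, .c), (.h, .b), (.h, .d), (.e, .f),
    (.e, .a), (.e, .b), (.e, .c), (.e, .d),
    (.f, .a), (.f, .b), (.f, .c), (.f, .d)] : List (V1 × V1))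

/-- The graph Γ₀. -/
def Graph0 : SimpleGraph V0 := SimpleGraph.fromRel rel0

/-- The graph Γ₁. -/
def Graph1 : SimpleGraph V1 := SimpleGraph.fromRel rel1


/-! Auxiliary lemmas -/

lemma raag_comm {G : SimpleGraph V} {u v : V} (h : G.Adj u v) :
    Commute (raagOf G u) (raagOf G v) := by
  have hr : (FreeGroup.of u * FreeGroup.of v * (FreeGroup.of u)⁻¹ * (FreeGroup.of v)⁻¹)
      ∈ raagRels G := ⟨u, v, h, rfl⟩
  have h1 : (PresentedGroup.mk (raagRels G)
      (FreeGroup.of u * FreeGroup.of v * (FreeGroup.of u)⁻¹ * (FreeGroup.of v)⁻¹)) = 1 := by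
    apply (QuotientGroup.eq_one_iff _).2
    exact Subgroup.subset_normalClosure hr
  rw [map_mul, map_mul, map_mul, map_inv, map_inv] at h1
  exact commutatorElement_eq_one_iff_commute.1 h1

lemma comm0 (u v : V0) (h : rel0 u v) (hne : u ≠ v) :
    Commute (raagOf Graph0 u) (raagOf Graph0 v) :=
  raag_comm ((SimpleGraph.fromRel_adj rel0 u v).2 ⟨hne, Or.inl h⟩)

lemma comm1 (u v : V1) (h : rel1 u v) (hne : u ≠ v) :
    Commute (raagOf Graph1 u) (raagOf Graph1 v) :=
  raag_comm ((SimpleGraph.fromRel_adj rel1 u v).2 ⟨hne, Or.inl h⟩)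

/-- The map on generators defining φ. -/
def f0 : V0 → RAAG Graph1
  | .a => raagOf Graph1 .a
  | .b => raagOf Graph1 .b
  | .c => raagOf Graph1 .c
  | .d => raagOf Graph1 .d
  | .g => raagOf Graph1 .g
  | .h => raagOf Graph1 .h
  | .q => raagOf Graph1 .e * raagOf Graph1 .f

/-- The map on generators defining the retraction ψ. -/
def f1 : V1 → RAAG Graph0
  | .a => raagOf Graph0 .a
  | .b => raagOf Graph0 .b
  | .c => raagOf Graph0 .c
  | .d => raagOf Graph0 .d
  | .g => raagOf Graph0 .g
  | .h => raagOf Graph0 .h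
  | .e => raagOf Graph0 .q
  | .f => 1

lemma f0_comm_of_rel (u v : V0) (h : rel0 u v) : Commute (f0 u) (f0 v) := by
  simp only [rel0, List.mem_cons, List.not_mem_nil, or_false, Prod.mk.injEq] at h
  rcases h with ⟨rfl,rfl⟩|⟨rfl,rfl⟩|⟨rfl,rfl⟩|⟨rfl,rfl⟩|⟨rfl,rfl⟩|⟨rfl,rfl⟩|⟨rfl,rfl⟩|⟨rfl,rfl⟩|⟨rfl,rfl⟩|⟨rfl,rfl⟩|⟨rfl,rfl⟩|⟨rfl,rfl⟩
  · exact comm1 _ _ (by simp [rel1]) (by decide)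
  · exact comm1 _ _ (by simp [rel1]) (by decide)
  · exact comm1 _ _ (by simp [rel1]) (by decide)
  · exact comm1 _ _ (by simp [rel1]) (by decide)
  · exact comm1 _ _ (by simp [rel1]) (by decide)
  · exact comm1 _ _ (by simp [rel1]) (by decide)
  · exact comm1 _ _ (by simp [rel1]) (by decide)
  · exact comm1 _ _ (by simp [rel1]) (by decide)
  · exact (comm1 _ _ (by simp [rel1]) (by decide)).mul_left (comm1 _ _ (by simp [rel1]) (by decide))
  · exact (comm1 _ _ (by simp [rel1]) (by decide)).mul_left (comm1 _ _ (by simp [rel1]) (by decide))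
  · exact (comm1 _ _ (by simp [rel1]) (by decide)).mul_left (comm1 _ _ (by simp [rel1]) (by decide))
  · exact (comm1 _ _ (by simp [rel1]) (by decide)).mul_left (comm1 _ _ (by simp [rel1]) (by decide))

lemma f1_comm_of_rel (u v : V1) (h : rel1 u v) : Commute (f1 u) (f1 v) := by
  simp only [rel1, List.mem_cons, List.not_mem_nil, or_false, Prod.mk.injEq] at h
  rcases h with ⟨rfl,rfl⟩|⟨rfl,rfl⟩|⟨rfl,rfl⟩|⟨rfl,rfl⟩|⟨rfl,rfl⟩|⟨rfl,rfl⟩|⟨rfl,rfl⟩|⟨rfl,rfl⟩|⟨rfl,rfl⟩|⟨rfl,rfl⟩|⟨rfl,rfl⟩|⟨rfl,rfl⟩|⟨rfl,rfl⟩|⟨rfl,rfl⟩|⟨rfl,rfl⟩|⟨rfl,rfl⟩|⟨rfl,rfl⟩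
  · exact comm0 _ _ (by simp [rel0]) (by decide)
  · exact comm0 _ _ (by simp [rel0]) (by decide)
  · exact comm0 _ _ (by simp [rel0]) (by decide)
  · exact comm0 _ _ (by simp [rel0]) (by decide)
  · exact comm0 _ _ (by simp [rel0]) (by decide)
  · exact comm0 _ _ (by simp [rel0]) (by decide)
  · exact comm0 _ _ (by simp [rel0]) (by decide)
  · exact comm0 _ _ (by simp [rel0]) (by decide)
  · exact Commute.one_right _
  · exact comm0 _ _ (by simp [rel0]) (by decide)
  · exact comm0 _ _ (by simp [rel0]) (by decide)
  · exact comm0 _ _ (by simp [rel0]) (by decide)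
  · exact comm0 _ _ (by simp [rel0]) (by decide)
  · exact Commute.one_left _
  · exact Commute.one_left _
  · exact Commute.one_left _
  · exact Commute.one_left _

lemma f0_comm (u v : V0) (h : Graph0.Adj u v) : Commute (f0 u) (f0 v) := by
  rw [Graph0, SimpleGraph.fromRel_adj] at h
  obtain ⟨hne, h | h⟩ := h
  · exact f0_comm_of_rel u v h
  · exact (f0_comm_of_rel v u h).symm

lemma f1_comm (u v : V1) (h : Graph1.Adj u v) : Commute (f1 u) (f1 v) := by
  rw [Graph1, SimpleGraph.fromRel_adj] at h
  obtain ⟨hne, h | h⟩ := h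
  · exact f1_comm_of_rel u v h
  · exact (f1_comm_of_rel v u h).symm

lemma h0 : ∀ r ∈ raagRels Graph0, FreeGroup.lift f0 r = 1 := by
  rintro r ⟨u, v, huv, rfl⟩
  rw [map_mul, map_mul, map_mul, map_inv, map_inv, FreeGroup.lift_apply_of, FreeGroup.lift_apply_of]
  exact commutatorElement_eq_one_iff_commute.2 (f0_comm u v huv)

lemma h1 : ∀ r ∈ raagRels Graph1, FreeGroup.lift f1 r = 1 := by
  rintro r ⟨u, v, huv, rfl⟩
  rw [map_mul, map_mul, map_mul, map_inv, map_inv, FreeGroup.lift_apply_of, FreeGroup.lift_apply_of]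
  exact commutatorElement_eq_one_iff_commute.2 (f1_comm u v huv)

/-- The homomorphism `A(Γ₀) → A(Γ₁)` defined by `q ↦ ef` and fixing
all the other generators is injective. -/
theorem kim_koberda_phi_injective :
    ∃ φ : RAAG Graph0 →* RAAG Graph1,
      Function.Injective φ ∧
      φ (raagOf Graph0 V0.q) = raagOf Graph1 V1.e * raagOf Graph1 V1.f ∧
      φ (raagOf Graph0 V0.a) = raagOf Graph1 V1.a ∧
      φ (raagOf Graph0 V0.b) = raagOf Graph1 V1.b ∧
      φ (raagOf Graph0 V0.c) = raagOf Graph1 V1.c ∧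
      φ (raagOf Graph0 V0.d) = raagOf Graph1 V1.d ∧
      φ (raagOf Graph0 V0.g) = raagOf Graph1 V1.g ∧
      φ (raagOf Graph0 V0.h) = raagOf Graph1 V1.h := by
  refine ⟨PresentedGroup.toGroup h0, ?_, ?_, ?_, ?_, ?_, ?_, ?_, ?_⟩
  · have hcomp : (PresentedGroup.toGroup h1).comp (PresentedGroup.toGroup h0) =
        MonoidHom.id (RAAG Graph0) := by
      apply PresentedGroup.ext
      intro x
      cases x <;>
        simp [MonoidHom.comp_apply, PresentedGroup.toGroup.of, f0, f1, raagOf, map_mul, MonoidHom.id_apply] <;> rfl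
    have : Function.LeftInverse (PresentedGroup.toGroup h1) (PresentedGroup.toGroup h0) := by
      intro x
      exact DFunLike.congr_fun hcomp x
    exact this.injective
  all_goals exact PresentedGroup.toGroup.of h0

end Paper
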